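/- arXiv:math/0409588 — 4 statements merged into one kernel-verified Lean document; each statement's English description precedes it below -/
import Mathlib

section
/- Let p be a prime and m a positive integer, and let G = (ℤ/pℤ)^m be the direct sum of m copies of the cyclic group of order p. For every sequence (g_k), k = 1, ..., p^m, of p^m elements of G there is a nonempty subset K of {1, ..., p^m} such that ∑_{k ∈ K} g_k = 0_G and ∑_{k ∈ K} 1/|g_k| ≤ 1 (the latter sum taken in the rationals). -/
open Finset

/-- normalize a nonzero vector by its first nonzero coordinate -/
noncomputable def nze (p m : ℕ) (v : Fin m → ZMod p) : Fin m → ZMod p :=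
  WithTop.recTopCoe 0 (fun j => (v j)⁻¹ • v)
    ((Finset.univ.filter (fun j => v j ≠ 0)).min)

theorem nze_spec (p m : ℕ) (hp : p.Prime) (v : Fin m → ZMod p) (hv : v ≠ 0) :
    ∃ c : ZMod p, c ≠ 0 ∧ v = c • nze p m v := by
  haveI := Fact.mk hp
  obtain ⟨j0, hj0⟩ := Function.ne_iff.mp hv
  have hne : j0 ∈ Finset.univ.filter (fun j => v j ≠ 0) := by
    simp only [Finset.mem_filter, Finset.mem_univ, true_and]; exact hj0
  cases hmin : (Finset.univ.filter (fun j => v j ≠ 0)).min with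
  | top =>
    exact absurd (Finset.min_eq_top.mp hmin ▸ hne) (Finset.notMem_empty j0)
  | coe j =>
    have hj : v j ≠ 0 := by
      have := Finset.mem_of_min hmin
      simp only [Finset.mem_filter, Finset.mem_univ, true_and] at this
      exact this
    refine ⟨v j, hj, ?_⟩
    rw [nze, hmin, WithTop.recTopCoe_coe]
    rw [smul_smul, mul_inv_cancel₀ hj, one_smul]

theorem nze_smul (p m : ℕ) (hp : p.Prime) (c : ZMod p) (hc : c ≠ 0)
    (v : Fin m → ZMod p) : nze p m (c • v) = nze p m v := by
  haveI := Fact.mk hp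
  have hset : (Finset.univ.filter (fun j => (c • v) j ≠ 0)) =
      (Finset.univ.filter (fun j => v j ≠ 0)) := by
    ext j; simp [Pi.smul_apply, smul_eq_mul, hc]
  rw [nze, nze, hset]
  cases hmin : (Finset.univ.filter (fun j => v j ≠ 0)).min with
  | top => rfl
  | coe j =>
    have hj : v j ≠ 0 := by
      have := Finset.mem_of_min hmin
      simp only [Finset.mem_filter, Finset.mem_univ, true_and] at this
      exact this
    rw [WithTop.recTopCoe_coe, WithTop.recTopCoe_coe]
    rw [Pi.smul_apply, smul_eq_mul, mul_inv_rev, smul_smul]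
    congr 1
    field_simp

theorem nze_ne_zero (p m : ℕ) (hp : p.Prime) (v : Fin m → ZMod p) (hv : v ≠ 0) :
    nze p m v ≠ 0 := by
  obtain ⟨c, hc, hvc⟩ := nze_spec p m hp v hv
  intro h
  rw [h, smul_zero] at hvc
  exact hv hvc

theorem nze_idem (p m : ℕ) (hp : p.Prime) (v : Fin m → ZMod p) (hv : v ≠ 0) :
    nze p m (nze p m v) = nze p m v := by
  haveI := Fact.mk hp
  obtain ⟨c, hc, hvc⟩ := nze_spec p m hp v hv
  have h2 := nze_smul p m hp c hc (nze p m v)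
  rw [← hvc] at h2
  exact h2.symm

/-- The Kleitman–Lemke statement for elementary abelian p-groups (ℤ/pℤ)^m. -/
theorem zero_sum_reciprocal_orders_elementary_abelian (p : ℕ) (hp : p.Prime)
    (m : ℕ) (hm : 0 < m) (g : Fin (p ^ m) → (Fin m → ZMod p)) :
    ∃ K : Finset (Fin (p ^ m)), K.Nonempty ∧
      (∑ k ∈ K, g k = 0) ∧ (∑ k ∈ K, (1 : ℚ) / (addOrderOf (g k) : ℚ) ≤ 1) := by
  classical
  haveI := Fact.mk hp
  by_cases hz : ∃ k, g k = 0
  · obtain ⟨k, hk⟩ := hz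
    exact ⟨{k}, Finset.singleton_nonempty k, by simp [hk], by simp [hk]⟩
  push_neg at hz
  have hord : ∀ k, addOrderOf (g k) = p := by
    intro k
    have hsm : p • (g k) = 0 := by
      funext j
      simp [nsmul_eq_mul, ZMod.natCast_self]
    have hdvd : addOrderOf (g k) ∣ p := addOrderOf_dvd_of_nsmul_eq_zero hsm
    rcases (Nat.Prime.eq_one_or_self_of_dvd hp _ hdvd) with h1 | h
    · exact absurd (AddMonoid.addOrderOf_eq_one_iff.mp h1) (hz k)
    · exact h
  set N : Fin (p ^ m) → (Fin m → ZMod p) := fun k => nze p m (g k) with hN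
  have hNfix : ∀ w ∈ Finset.univ.image N, nze p m w = w ∧ w ≠ 0 := by
    intro w hw
    obtain ⟨k, _, hk⟩ := Finset.mem_image.mp hw
    constructor
    · rw [← hk]; exact nze_idem p m hp (g k) (hz k)
    · rw [← hk]; exact nze_ne_zero p m hp (g k) (hz k)
  have key : ∃ w, p ≤ (Finset.univ.filter (fun k => N k = w)).card := by
    by_contra hcon
    push_neg at hcon
    have h1 : Fintype.card (Fin (p ^ m)) =
        ∑ w ∈ Finset.univ.image N, (Finset.univ.filter (fun k => N k = w)).card := by
      rw [← Finset.card_univ]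
      exact Finset.card_eq_sum_card_fiberwise
        (fun x _ => Finset.mem_image_of_mem N (Finset.mem_univ x))
    have h2 : ∑ w ∈ Finset.univ.image N, (Finset.univ.filter (fun k => N k = w)).card
        ≤ (Finset.univ.image N).card * (p - 1) := by
      rw [Finset.card_eq_sum_ones (Finset.univ.image N), Finset.sum_mul]
      apply Finset.sum_le_sum
      intro w hw
      have := hcon w
      omega
    have h3 : (Finset.univ.image N).card * (p - 1) ≤ p ^ m - 1 := by
      have hmaps : ∀ cw ∈ (Finset.univ.erase (0 : ZMod p)) ×ˢ (Finset.univ.image N),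
          (cw.1 • cw.2 : Fin m → ZMod p) ∈ Finset.univ.erase (0 : Fin m → ZMod p) := by
        rintro ⟨cc, w⟩ hcw
        rw [Finset.mem_product] at hcw
        obtain ⟨hc, hw⟩ := hcw
        have hc0 : cc ≠ 0 := Finset.ne_of_mem_erase hc
        have hw0 : w ≠ 0 := (hNfix w hw).2
        exact Finset.mem_erase.mpr ⟨smul_ne_zero hc0 hw0, Finset.mem_univ _⟩
      have hinj : Set.InjOn (fun cw : ZMod p × (Fin m → ZMod p) => cw.1 • cw.2)
          ((Finset.univ.erase (0 : ZMod p)) ×ˢ (Finset.univ.image N) : Finset _) := by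
        rintro ⟨cc, w⟩ hcw ⟨cc', w'⟩ hcw' heq
        simp only [Finset.coe_product, Set.mem_prod, Finset.mem_coe,
          Finset.mem_erase, Finset.mem_coe] at hcw hcw'
        obtain ⟨⟨hc0, -⟩, hw⟩ := hcw
        obtain ⟨⟨hc0', -⟩, hw'⟩ := hcw'
        simp only at heq
        have hww' : w = w' := by
          have e1 : nze p m (cc • w) = w := by
            rw [nze_smul p m hp cc hc0, (hNfix w hw).1]
          have e2 : nze p m (cc' • w') = w' := by
            rw [nze_smul p m hp cc' hc0', (hNfix w' hw').1]
          rw [← e1, heq, e2]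
        subst hww'
        have hwne : w ≠ 0 := (hNfix w hw).2
        obtain ⟨j, hj⟩ := Function.ne_iff.mp hwne
        have : cc * w j = cc' * w j := by
          have := congrFun heq j
          simpa [Pi.smul_apply, smul_eq_mul] using this
        have : cc = cc' := mul_right_cancel₀ hj this
        simp [this]
      have hcard := Finset.card_le_card_of_injOn _ hmaps hinj
      rw [Finset.card_product, Finset.card_erase_of_mem (Finset.mem_univ _),
        Finset.card_erase_of_mem (Finset.mem_univ _), Finset.card_univ,
        Finset.card_univ] at hcard
      have hcz : Fintype.card (ZMod p) = p := ZMod.card p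
      have hcv : Fintype.card (Fin m → ZMod p) = p ^ m := by simp [ZMod.card]
      rw [hcz, hcv, mul_comm] at hcard
      exact hcard
    have h4 : 0 < p ^ m := pow_pos hp.pos m
    rw [Fintype.card_fin] at h1
    omega
  obtain ⟨w, hw⟩ := key
  obtain ⟨T, hTsub, hTcard⟩ := Finset.exists_subset_card_eq hw
  let e := T.equivFinOfCardEq hTcard
  let f : Fin p → Fin (p ^ m) := fun i => ((e.symm i : T) : Fin (p ^ m))
  have hfinj : Function.Injective f := by
    intro i i' h
    exact e.symm.injective (Subtype.ext h)
  have hfw : ∀ i, N (f i) = w := by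
    intro i
    have hmem : f i ∈ T := (e.symm i).2
    have := hTsub hmem
    exact (Finset.mem_filter.mp this).2
  have hcex : ∀ i, ∃ cc : ZMod p, g (f i) = cc • w := by
    intro i
    obtain ⟨cc, hcne, hgc⟩ := nze_spec p m hp (g (f i)) (hz _)
    exact ⟨cc, by rw [hgc]; rw [show nze p m (g (f i)) = w from hfw i]⟩
  choose c hc using hcex
  have hpig : ∃ a b : Fin (p + 1), (a : ℕ) < (b : ℕ) ∧
      (∑ i ∈ Finset.univ.filter (fun i : Fin p => (i : ℕ) < (a : ℕ)), c i) =
      (∑ i ∈ Finset.univ.filter (fun i : Fin p => (i : ℕ) < (b : ℕ)), c i) := by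
    have hcard : Fintype.card (ZMod p) < Fintype.card (Fin (p + 1)) := by
      rw [ZMod.card p, Fintype.card_fin]; omega
    obtain ⟨a, b, hab, hs⟩ := Fintype.exists_ne_map_eq_of_card_lt
      (fun t : Fin (p + 1) =>
        ∑ i ∈ Finset.univ.filter (fun i : Fin p => (i : ℕ) < (t : ℕ)), c i) hcard
    have hne : (a : ℕ) ≠ (b : ℕ) := fun h => hab (Fin.ext h)
    rcases hne.lt_or_gt with h | h
    · exact ⟨a, b, h, hs⟩
    · exact ⟨b, a, h, hs.symm⟩
  obtain ⟨a, b, hab, hs⟩ := hpig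
  set I : Finset (Fin p) :=
    Finset.univ.filter (fun i : Fin p => (a : ℕ) ≤ (i : ℕ) ∧ (i : ℕ) < (b : ℕ)) with hI
  have hsplit : Finset.univ.filter (fun i : Fin p => (i : ℕ) < (b : ℕ)) =
      Finset.univ.filter (fun i : Fin p => (i : ℕ) < (a : ℕ)) ∪ I := by
    ext i
    simp only [hI, Finset.mem_union, Finset.mem_filter, Finset.mem_univ, true_and]
    omega
  have hdisj : Disjoint (Finset.univ.filter (fun i : Fin p => (i : ℕ) < (a : ℕ))) I := by
    rw [Finset.disjoint_left]
    intro i hi hi'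
    simp only [hI, Finset.mem_filter, Finset.mem_univ, true_and] at hi hi'
    omega
  have hsum0 : ∑ i ∈ I, c i = 0 := by
    rw [hsplit, Finset.sum_union hdisj] at hs
    exact (left_eq_add.mp hs)
  have hbp : (b : ℕ) ≤ p := Nat.lt_succ_iff.mp b.isLt
  have hap : (a : ℕ) < p := lt_of_lt_of_le hab hbp
  have hi0 : (⟨(a : ℕ), hap⟩ : Fin p) ∈ I := by
    simp only [hI, Finset.mem_filter, Finset.mem_univ, true_and]
    omega
  refine ⟨I.image f, ⟨f ⟨(a : ℕ), hap⟩, Finset.mem_image_of_mem f hi0⟩, ?_, ?_⟩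
  · rw [Finset.sum_image (fun x _ y _ h => hfinj h)]
    calc ∑ i ∈ I, g (f i) = ∑ i ∈ I, c i • w := Finset.sum_congr rfl (fun i _ => hc i)
      _ = (∑ i ∈ I, c i) • w := (Finset.sum_smul).symm
      _ = 0 := by rw [hsum0, zero_smul]
  · have hcardK : (I.image f).card ≤ p := by
      calc (I.image f).card ≤ I.card := Finset.card_image_le
        _ ≤ Fintype.card (Fin p) := by
          rw [← Finset.card_univ]; exact Finset.card_filter_le _ _
        _ = p := Fintype.card_fin p
    have hterm : ∀ k ∈ I.image f, (1 : ℚ) / (addOrderOf (g k) : ℚ) = 1 / p := by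
      intro k _
      rw [hord k]
    rw [Finset.sum_congr rfl hterm, Finset.sum_const, nsmul_eq_mul]
    have hp0 : (0 : ℚ) < (p : ℚ) := by exact_mod_cast hp.pos
    calc ((I.image f).card : ℚ) * (1 / p) ≤ (p : ℚ) * (1 / p) := by
          apply mul_le_mul_of_nonneg_right
          · exact_mod_cast hcardK
          · positivity
      _ = 1 := by field_simp
end

section
/- Let G be a finite abelian group of exponent N. Every sequence (g_k), k = 1, ..., |G|, of |G| elements of G contains a nonempty subset K of {1, ..., |G|} with |K| ≤ N such that ∑_{k ∈ K} g_k = 0_G. -/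
/-!
Let `N = p * m` with `p` the least prime factor of the exponent `N`, and `H = {x | m • x = 0}`.
Then `G ⧸ H` has exponent dividing `p` and `H` has exponent dividing `m`. Working in `G ⧸ H`, one
greedily extracts disjoint blocks of at most `p` terms whose sums lie in `H` as long as
`|G ⧸ H|` terms remain; this yields at least `|H|` blocks, and by induction some at most `m` of
the block sums add up to zero, which uses at most `m * p = N` terms.

When `N = p` is prime and no term vanishes, each term spans one of the `(|G| - 1) / (p - 1)` lines
of `G`, so some line contains `p` of the terms; any `p` terms of a group of order `p` have a
nonempty zero-sum subfamily (pigeonhole on prefix sums).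
-/

open Finset AddMonoid

section

variable {G : Type*} [AddCommGroup G]

def HasShortZeroSums (G : Type*) [AddCommGroup G] (n : ℕ) : Prop :=
  ∀ (ι : Type) (s : Finset ι) (g : ι → G), Nat.card G ≤ #s →
    ∃ K ⊆ s, K.Nonempty ∧ #K ≤ n ∧ ∑ i ∈ K, g i = 0

namespace HasShortZeroSums

theorem mono {m n : ℕ} (h : HasShortZeroSums G m) (hmn : m ≤ n) : HasShortZeroSums G n :=
  fun ι s g hs ↦
    let ⟨K, hKs, hK, hKm, hK0⟩ := h ι s g hs
    ⟨K, hKs, hK, hKm.trans hmn, hK0⟩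

theorem exists_of_forall_mem {H : AddSubgroup G} {n : ℕ} (hH : HasShortZeroSums H n)
    {ι : Type} (s : Finset ι) {g : ι → G} (hg : ∀ i ∈ s, g i ∈ H) (hs : Nat.card H ≤ #s) :
    ∃ K ⊆ s, K.Nonempty ∧ #K ≤ n ∧ ∑ i ∈ K, g i = 0 := by
  classical
  obtain ⟨K, hKs, hK, hKn, hK0⟩ := hH ι s (fun i ↦ if h : g i ∈ H then ⟨g i, h⟩ else 0) hs
  refine ⟨K, hKs, hK, hKn, ?_⟩
  rw [← H.coe_zero, ← hK0, AddSubgroup.val_finsetSum]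
  exact sum_congr rfl fun i hi ↦ by simp [hg i (hKs hi)]

end HasShortZeroSums

theorem Fin.exists_nonempty_sum_eq_zero_of_card_le [Finite G] {n : ℕ} (f : Fin n → G)
    (hn : Nat.card G ≤ n) : ∃ K : Finset (Fin n), K.Nonempty ∧ ∑ i ∈ K, f i = 0 := by
  classical
  have := Fintype.ofFinite G
  let prefixSet (j : ℕ) : Finset (Fin n) := univ.filter fun i ↦ (i : ℕ) < j
  obtain ⟨a, ha, b, hb, hab, hsum⟩ := exists_ne_map_eq_of_card_lt_of_maps_to
    (s := range (n + 1)) (t := univ) (f := fun j ↦ ∑ i ∈ prefixSet j, f i)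
    (by simpa [← Nat.card_eq_fintype_card] using Nat.lt_succ_of_le hn) (fun _ _ ↦ mem_univ _)
  wlog hlt : a < b generalizing a b
  · exact this b hb a ha hab.symm hsum.symm (hab.lt_or_gt.resolve_left hlt)
  have hsub : prefixSet a ⊆ prefixSet b := fun i hi ↦ by
    simp only [prefixSet, mem_filter, mem_univ, true_and] at hi ⊢; omega
  have hb' : b ≤ n := Nat.lt_succ_iff.1 (mem_range.1 hb)
  refine ⟨prefixSet b \ prefixSet a, ⟨⟨a, by omega⟩, by simp [prefixSet, hlt]⟩, ?_⟩
  rw [sum_sdiff_eq_sub hsub, hsum, sub_self]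

theorem hasShortZeroSums_card [Finite G] : HasShortZeroSums G (Nat.card G) := by
  intro ι s g hs
  obtain ⟨t, hts, ht⟩ := exists_subset_card_eq hs
  let e : Fin #t ↪ ι := t.equivFin.symm.toEmbedding.trans (Function.Embedding.subtype _)
  obtain ⟨K, hK, hK0⟩ := Fin.exists_nonempty_sum_eq_zero_of_card_le (g ∘ e) ht.ge
  refine ⟨K.map e, fun x hx ↦ ?_, hK.map, ?_, by rwa [sum_map]⟩
  · obtain ⟨i, -, rfl⟩ := mem_map.1 hx
    exact hts (t.equivFin.symm i).2
  · simpa [ht] using card_le_univ K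

section ExponentPrime

variable {p : ℕ}

theorem addOrderOf_eq_of_exponent_eq_prime (hp : p.Prime) (hG : exponent G = p) {x : G}
    (hx : x ≠ 0) : addOrderOf x = p :=
  have := Fact.mk hp
  addOrderOf_eq_prime (hG ▸ exponent_nsmul_eq_zero x) hx

theorem zmultiples_eq_of_exponent_eq_prime [Finite G] (hp : p.Prime) (hG : exponent G = p)
    {x y : G} (hy : y ≠ 0) (hyx : y ∈ AddSubgroup.zmultiples x) :
    AddSubgroup.zmultiples y = AddSubgroup.zmultiples x := by
  have hx : x ≠ 0 := by rintro rfl; simp_all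
  refine AddSubgroup.eq_of_le_of_card_ge (AddSubgroup.zmultiples_le.2 hyx) ?_
  rw [Nat.card_zmultiples, Nat.card_zmultiples, addOrderOf_eq_of_exponent_eq_prime hp hG hx,
    addOrderOf_eq_of_exponent_eq_prime hp hG hy]

theorem card_image_zmultiples_mul_le [Fintype G] [DecidableEq G]
    [DecidableEq (AddSubgroup G)] (hp : p.Prime) (hG : exponent G = p) :
    #((univ.erase (0 : G)).image AddSubgroup.zmultiples) * (p - 1) ≤ Fintype.card G - 1 := by
  classical
  rw [mul_comm, ← card_univ, ← card_erase_of_mem (mem_univ 0)]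
  refine mul_card_image_le_card _ _ fun C hC ↦ ?_
  obtain ⟨x, hx, rfl⟩ := mem_image.1 hC
  calc p - 1 = #(((AddSubgroup.zmultiples x : Set G).toFinset).erase 0) := by
        rw [card_erase_of_mem (by simp), ← Nat.card_eq_card_toFinset, SetLike.coe_sort_coe,
          Nat.card_zmultiples, addOrderOf_eq_of_exponent_eq_prime hp hG (ne_of_mem_erase hx)]
    _ ≤ _ := card_le_card fun y hy ↦ by
        have hy0 := ne_of_mem_erase hy
        simp only [mem_erase, Set.mem_toFinset, SetLike.mem_coe] at hy
        simpa [hy0] using zmultiples_eq_of_exponent_eq_prime hp hG hy0 hy.2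

theorem hasShortZeroSums_of_exponent_eq_prime [Finite G] (hp : p.Prime) (hG : exponent G = p) :
    HasShortZeroSums G p := by
  classical
  have := Fintype.ofFinite G
  intro ι s g hs
  by_cases h0 : ∃ i ∈ s, g i = 0
  · obtain ⟨i, hi, hgi⟩ := h0
    exact ⟨{i}, singleton_subset_iff.2 hi, singleton_nonempty i, by simpa using hp.one_le,
      by simpa using hgi⟩
  push Not at h0
  have hlines : #((univ.erase (0 : G)).image AddSubgroup.zmultiples) * (p - 1) < #s := by
    have := card_image_zmultiples_mul_le hp hG
    have := Fintype.card_pos (α := G)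
    rw [Nat.card_eq_fintype_card] at hs
    omega
  obtain ⟨C, hC, hCs⟩ := exists_lt_card_fiber_of_mul_lt_card_of_maps_to
    (f := fun i ↦ AddSubgroup.zmultiples (g i))
    (fun i hi ↦ mem_image.2 ⟨g i, by simpa using h0 i hi, rfl⟩) hlines
  obtain ⟨x, hx, rfl⟩ := mem_image.1 hC
  have hcard : Nat.card (AddSubgroup.zmultiples x) = p := by
    rw [Nat.card_zmultiples, addOrderOf_eq_of_exponent_eq_prime hp hG (ne_of_mem_erase hx)]
  obtain ⟨K, hKs, hK, hKp, hK0⟩ := hasShortZeroSums_card.exists_of_forall_mem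
    (s.filter fun i ↦ AddSubgroup.zmultiples (g i) = AddSubgroup.zmultiples x)
    (fun i hi ↦ (mem_filter.1 hi).2 ▸ AddSubgroup.mem_zmultiples (g i)) (by omega)
  exact ⟨K, hKs.trans (filter_subset _ _), hK, hcard ▸ hKp, hK0⟩

end ExponentPrime

theorem Finset.exists_pairwiseDisjoint_of_forall_exists_subset {ι : Type*} [DecidableEq ι]
    {P : Finset ι → Prop} {q r : ℕ}
    (h : ∀ t : Finset ι, r ≤ #t → ∃ B ⊆ t, B.Nonempty ∧ #B ≤ q ∧ P B) (s : Finset ι) :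
    ∃ 𝓑 : Finset (Finset ι), (∀ B ∈ 𝓑, B ⊆ s ∧ B.Nonempty ∧ #B ≤ q ∧ P B) ∧
      (𝓑 : Set (Finset ι)).PairwiseDisjoint id ∧ #s < q * #𝓑 + r := by
  induction s using Finset.strongInduction with
  | H s ih =>
  by_cases hs : #s < r
  · exact ⟨∅, by simp, by simp, by simpa⟩
  obtain ⟨B, hBs, hB, hBq, hPB⟩ := h s (not_lt.1 hs)
  obtain ⟨𝓑, h𝓑, hdisj, hcard⟩ := ih (s \ B) (sdiff_ssubset hBs hB)
  have hB𝓑 : B ∉ 𝓑 := fun hmem ↦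
    have ⟨x, hx⟩ := hB
    (mem_sdiff.1 ((h𝓑 B hmem).1 hx)).2 hx
  refine ⟨insert B 𝓑, ?_, ?_, ?_⟩
  · simp only [mem_insert, forall_eq_or_imp]
    exact ⟨⟨hBs, hB, hBq, hPB⟩, fun C hC ↦ ⟨(h𝓑 C hC).1.trans sdiff_subset, (h𝓑 C hC).2⟩⟩
  · rw [coe_insert]
    exact hdisj.insert fun C hC _ ↦ disjoint_of_subset_right (h𝓑 C hC).1 disjoint_sdiff
  · have := card_sdiff_add_card_eq_card hBs
    rw [card_insert_of_notMem hB𝓑, mul_add_one]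
    omega

theorem HasShortZeroSums.of_quotient {H : AddSubgroup G} {a b : ℕ} (hH : HasShortZeroSums H b)
    (hQ : HasShortZeroSums (G ⧸ H) a) (ha : a ≤ Nat.card (G ⧸ H)) :
    HasShortZeroSums G (b * a) := by
  classical
  intro ι s g hs
  obtain ⟨𝓑, h𝓑, hdisj, hcard⟩ := exists_pairwiseDisjoint_of_forall_exists_subset
    (P := fun B ↦ ∑ i ∈ B, g i ∈ H) (fun t ht ↦ by
      obtain ⟨B, hBt, hB, hBa, hB0⟩ := hQ ι t (fun i ↦ (g i : G ⧸ H)) ht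
      exact ⟨B, hBt, hB, hBa, by rwa [← QuotientAddGroup.eq_zero_iff, QuotientAddGroup.mk_sum]⟩) s
  have h𝓑card : Nat.card H ≤ #𝓑 := by
    rw [H.card_eq_card_quotient_mul_card_addSubgroup] at hs
    by_contra! h
    nlinarith [Nat.mul_le_mul_left (Nat.card (G ⧸ H)) (Nat.succ_le_of_lt h),
      Nat.mul_le_mul_right #𝓑 ha]
  obtain ⟨J, hJ𝓑, hJ, hJb, hJ0⟩ := hH.exists_of_forall_mem 𝓑 (g := fun B ↦ ∑ i ∈ B, g i)
    (fun B hB ↦ (h𝓑 B hB).2.2.2) h𝓑card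
  refine ⟨J.biUnion id, biUnion_subset.2 fun B hB ↦ (h𝓑 B (hJ𝓑 hB)).1,
    hJ.biUnion fun B hB ↦ (h𝓑 B (hJ𝓑 hB)).2.1, ?_, ?_⟩
  · calc #(J.biUnion id) ≤ ∑ B ∈ J, #B := card_biUnion_le
      _ ≤ ∑ _B ∈ J, a := sum_le_sum fun B hB ↦ (h𝓑 B (hJ𝓑 hB)).2.2.1
      _ = #J * a := by rw [sum_const, smul_eq_mul]
      _ ≤ b * a := Nat.mul_le_mul_right a hJb
  · rwa [sum_biUnion (hdisj.subset (coe_subset.2 hJ𝓑))]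

theorem exists_addSubgroup_ne_bot_ne_top_exponent_mul_le [Finite G] (h1 : exponent G ≠ 1)
    (hp : ¬(exponent G).Prime) :
    ∃ H : AddSubgroup G, H ≠ ⊥ ∧ H ≠ ⊤ ∧ exponent H * exponent (G ⧸ H) ≤ exponent G := by
  obtain ⟨m, hm⟩ := (exponent G).minFac_dvd
  set p := (exponent G).minFac
  have hpp : p.Prime := Nat.minFac_prime h1
  have hN0 : exponent G ≠ 0 := exponent_ne_zero_of_finite
  have hm0 : m ≠ 0 := by rintro rfl; exact hN0 (by simpa using hm)
  have hm1 : m ≠ 1 := by rintro rfl; exact hp (by rw [hm, mul_one]; exact hpp)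
  have hmN : m < exponent G := by
    rw [hm]; exact lt_mul_left (Nat.pos_of_ne_zero hm0) hpp.one_lt
  have hpN : p < exponent G := by
    rw [hm]; exact lt_mul_right hpp.pos (by omega)
  obtain ⟨y, hy⟩ := exists_addOrderOf_eq_exponent (ExponentExists.of_finite (G := G))
  have not_nsmul_eq_zero {k : ℕ} (hk0 : k ≠ 0) (hk : k < exponent G) : k • y ≠ 0 := by
    rw [Ne, ← addOrderOf_dvd_iff_nsmul_eq_zero, hy]
    exact fun hdvd ↦ (Nat.le_of_dvd (Nat.pos_of_ne_zero hk0) hdvd).not_gt hk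
  refine ⟨(nsmulAddMonoidHom m).ker, ?_, ?_, ?_⟩
  · refine (AddSubgroup.ne_bot_iff_exists_ne_zero).2 ⟨⟨p • y, ?_⟩, ?_⟩
    · simp [AddMonoidHom.mem_ker, smul_smul, mul_comm m, ← hm, exponent_nsmul_eq_zero]
    · simpa [Subtype.ext_iff] using not_nsmul_eq_zero hpp.ne_zero hpN
  · exact fun htop ↦ not_nsmul_eq_zero hm0 hmN (by
      simpa using (AddSubgroup.eq_top_iff' _).1 htop y)
  · have hH : exponent (nsmulAddMonoidHom (α := G) m).ker ∣ m :=
      exponent_dvd_of_forall_nsmul_eq_zero fun x ↦ Subtype.ext x.2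
    have hQ : exponent (G ⧸ (nsmulAddMonoidHom (α := G) m).ker) ∣ p :=
      exponent_dvd_of_forall_nsmul_eq_zero fun x ↦ QuotientAddGroup.induction_on x fun x ↦ by
        rw [← QuotientAddGroup.mk_nsmul, QuotientAddGroup.eq_zero_iff]
        simp [AddMonoidHom.mem_ker, smul_smul, mul_comm m, ← hm, exponent_nsmul_eq_zero]
    calc _ ≤ m * p := Nat.mul_le_mul (Nat.le_of_dvd (Nat.pos_of_ne_zero hm0) hH)
          (Nat.le_of_dvd hpp.pos hQ)
      _ = exponent G := by rw [hm, mul_comm]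

theorem hasShortZeroSums_exponent (G : Type*) [AddCommGroup G] [Finite G] :
    HasShortZeroSums G (exponent G) := by
  induction hn : Nat.card G using Nat.strong_induction_on generalizing G with
  | _ n ih =>
  subst hn
  obtain h1 | h1 := eq_or_ne (exponent G) 1
  · have := exp_eq_one_iff.1 h1
    exact hasShortZeroSums_card.mono (h1 ▸ Finite.card_le_one_iff_subsingleton.2 this)
  by_cases hp : (exponent G).Prime
  · exact hasShortZeroSums_of_exponent_eq_prime hp rfl
  obtain ⟨H, hbot, htop, hle⟩ := exists_addSubgroup_ne_bot_ne_top_exponent_mul_le h1 hp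
  have hH : Nat.card H < Nat.card G := not_le.1 fun h ↦ htop (H.eq_top_of_le_card h)
  have hQ : Nat.card (G ⧸ H) < Nat.card G := by
    rw [H.card_eq_card_quotient_mul_card_addSubgroup]
    exact lt_mul_of_one_lt_right Nat.card_pos (H.one_lt_card_iff_ne_bot.2 hbot)
  exact ((ih _ hH H rfl).of_quotient (ih _ hQ (G ⧸ H) rfl)
    (Nat.le_of_dvd Nat.card_pos AddGroup.exponent_dvd_nat_card)).mono hle

end

/-- Every sequence of |G| elements of a finite abelian group G contains a
nonempty zero-sum subsequence of length at most the exponent N(G). -/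
theorem zero_sum_subsequence_card_le_exponent (G : Type*) [AddCommGroup G]
    [Fintype G] (g : Fin (Fintype.card G) → G) :
    ∃ K : Finset (Fin (Fintype.card G)), K.Nonempty ∧
      K.card ≤ AddMonoid.exponent G ∧ ∑ k ∈ K, g k = 0 := by
  obtain ⟨K, -, hK⟩ := hasShortZeroSums_exponent G _ univ g (by simp [Nat.card_eq_fintype_card])
  exact ⟨K, hK⟩
end

section
/- Let G be a finite abelian group of exponent N, and let m be a positive integer with m ≥ N·(1 + ln(|G|/N)), where ln denotes the natural logarithm (taken in the real numbers). Then every sequence (g_k), k = 1, ..., m, of m elements of G contains a nonempty subset K of {1, ..., m} such that ∑_{k ∈ K} g_k = 0_G. -/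
/-!
If `g₁, …, gₘ` has no nonempty zero-sum subsequence, then for every choice of complex numbers
`x₁, …, xₘ` some character `ψ` of `G` avoids them all, `ψ gⱼ ≠ xⱼ`: expanding
`∑_ψ ∏ⱼ (xⱼ - ψ gⱼ)` over subsets `K`, orthogonality kills every term except `K = ∅`, which
leaves `|G| ∏ⱼ xⱼ ≠ 0`. Now choose the `xⱼ` greedily: each `ψ gⱼ` is an `N`-th root of unity,
so the most popular value of `ψ gⱼ` among the characters avoiding `x₁, …, xⱼ₋₁` is taken by at
least a `1/N` fraction of them. Starting from `|G|` characters, at least one always survives,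
which allows at most `N - 1 + N log (|G| / N)` steps.
-/

open Finset

lemma AddChar.map_sum_eq_prod {ι A M : Type*} [AddCommMonoid A] [CommMonoid M]
    (ψ : AddChar A M) (s : Finset ι) (g : ι → A) : ψ (∑ i ∈ s, g i) = ∏ i ∈ s, ψ (g i) := by
  induction s using Finset.cons_induction with
  | empty => simp
  | cons a s ha ih => rw [sum_cons, prod_cons, AddChar.map_add_eq_mul, ih]

namespace EBK

section Characters

variable {G : Type*} [AddCommGroup G] [Finite G]

lemma exists_addChar_apply_ne_of_ne_zero {ι : Type*} [Fintype ι] [DecidableEq ι] {g : ι → G}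
    (hfree : ∀ K : Finset ι, K.Nonempty → ∑ i ∈ K, g i ≠ 0) {x : ι → ℂ} (hx : ∀ i, x i ≠ 0) :
    ∃ ψ : AddChar G ℂ, ∀ i, ψ (g i) ≠ x i := by
  by_contra! hhit
  have hsum_zero : ∑ ψ : AddChar G ℂ, ∏ i, (x i - ψ (g i)) = 0 :=
    sum_eq_zero fun ψ _ => by
      obtain ⟨i, hi⟩ := hhit ψ
      exact prod_eq_zero (mem_univ i) (by rw [hi, sub_self])
  have hsum_eq : ∑ ψ : AddChar G ℂ, ∏ i, (x i - ψ (g i)) =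
      Fintype.card (AddChar G ℂ) * ∏ i, x i := by
    simp_rw [prod_sub, ← AddChar.map_sum_eq_prod]
    rw [sum_comm, sum_eq_single_of_mem ∅ (empty_mem_powerset _)]
    · simp
    · intro K _ hK
      rw [← mul_sum, AddChar.sum_apply_eq_zero_iff_ne_zero.2
        (hfree K (nonempty_iff_ne_empty.2 hK)), mul_zero]
  rw [hsum_eq] at hsum_zero
  exact mul_ne_zero (Nat.cast_ne_zero.2 Fintype.card_ne_zero)
    (prod_ne_zero_iff.2 fun i _ => hx i) hsum_zero

lemma exists_addChar_apply_ne {ι : Type*} [Fintype ι] [DecidableEq ι] {g : ι → G}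
    (hfree : ∀ K : Finset ι, K.Nonempty → ∑ i ∈ K, g i ≠ 0) (x : ι → ℂ) :
    ∃ ψ : AddChar G ℂ, ∀ i, ψ (g i) ≠ x i := by
  obtain ⟨ψ, hψ⟩ := exists_addChar_apply_ne_of_ne_zero hfree
    (x := fun i => if x i = 0 then 1 else x i) fun i => by split_ifs with h <;> simp [h]
  refine ⟨ψ, fun i => ?_⟩
  by_cases h : x i = 0
  · rw [h]
    exact (ψ.val_isUnit _).ne_zero
  · simpa [h] using hψ i

lemma card_image_addChar_apply_le (s : Finset (AddChar G ℂ)) (a : G) :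
    #(s.image fun ψ => ψ a) ≤ AddMonoid.exponent G := by
  have hn := Nat.pos_of_ne_zero (AddMonoid.exponent_ne_zero_of_finite (G := G))
  calc #(s.image fun ψ => ψ a)
      ≤ #(Polynomial.nthRoots (AddMonoid.exponent G) (1 : ℂ)).toFinset := by
        refine card_le_card fun z hz => ?_
        obtain ⟨ψ, -, rfl⟩ := mem_image.1 hz
        rw [Multiset.mem_toFinset, Polynomial.mem_nthRoots hn, ← AddChar.map_nsmul_eq_pow,
          AddMonoid.exponent_nsmul_eq_zero, AddChar.map_zero_eq_one]
    _ ≤ AddMonoid.exponent G :=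
        (Multiset.toFinset_card_le _).trans (Polynomial.card_nthRoots _ _)

end Characters

/-- Number of greedy steps that `u` points survive if every step keeps at most a fraction
`1 - 1/n` of them and at least one point is left: `u - 1` steps below `n`, plus
`n log (u / n)` to get down to `n`. -/
noncomputable def bound (n u : ℕ) : ℝ :=
  if u < n then u - 1 else n - 1 + n * Real.log (u / n)
lemma log_div_nonneg {n u : ℕ} (hn : 0 < n) (hnu : n ≤ u) : 0 ≤ Real.log (u / n) :=
  Real.log_nonneg ((one_le_div₀ (by exact_mod_cast hn)).2 (by exact_mod_cast hnu))

lemma bound_nonneg {n u : ℕ} (hn : 0 < n) (hu : 0 < u) : 0 ≤ bound n u := by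
  unfold bound
  split_ifs with hun
  · simp [Nat.one_le_cast.2 hu]
  · have := log_div_nonneg hn (not_lt.1 hun)
    have : (1 : ℝ) ≤ n := Nat.one_le_cast.2 hn
    positivity

lemma bound_add_one_le {n u u' : ℕ} (hn : 0 < n) (hu' : 0 < u') (hlt : u' < u)
    (hshrink : (u' : ℝ) ≤ u - u / n) : bound n u' + 1 ≤ bound n u := by
  have hnR : (0 : ℝ) < n := by exact_mod_cast hn
  have hu'R : (0 : ℝ) < u' := by exact_mod_cast hu'
  have hltR : (u' : ℝ) + 1 ≤ u := by exact_mod_cast hlt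
  have huR : (0 : ℝ) < u := by linarith
  unfold bound
  split_ifs with hu'n hun hun
  · linarith
  · have := log_div_nonneg hn (not_lt.1 hun)
    have : (u' : ℝ) + 1 ≤ n := by exact_mod_cast hu'n
    nlinarith
  · omega
  · -- `log x ≤ x - 1` at `x = u' / u ≤ 1 - 1 / n`
    have hratio : Real.log (u' / u) ≤ -1 / n := by
      refine (Real.log_le_sub_one_of_pos (by positivity)).trans ?_
      rw [div_sub_one (by positivity), div_le_div_iff₀ (by positivity) hnR]
      rw [div_eq_mul_inv] at hshrink
      nlinarith [mul_inv_cancel₀ hnR.ne']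
    have hsplit : Real.log (u' / n) = Real.log (u / n) + Real.log (u' / u) := by
      rw [← Real.log_mul (by positivity) (by positivity)]
      congr 1
      field_simp
    rw [hsplit]
    have : (n : ℝ) * (-1 / n) = -1 := by field_simp
    nlinarith

theorem le_bound_of_forall_exists_ne {X β : Type*} [DecidableEq β] [Nonempty β] {n : ℕ}
    (hn : 0 < n) {m : ℕ} (c : Fin m → X → β) (U : Finset X)
    (himage : ∀ j, #(U.image (c j)) ≤ n) (havoid : ∀ x : Fin m → β, ∃ φ ∈ U, ∀ j, c j φ ≠ x j) :
    (m : ℝ) ≤ bound n #U := by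
  induction m generalizing U with
  | zero =>
    obtain ⟨φ, hφ, -⟩ := havoid Fin.elim0
    exact_mod_cast bound_nonneg hn (card_pos.2 ⟨φ, hφ⟩)
  | succ m ih =>
    obtain ⟨φ₀, hφ₀, -⟩ := havoid fun _ => Classical.arbitrary β
    have hcount : #(U.image (c 0)) • ((#U : ℝ) / n) ≤ #U := by
      rw [nsmul_eq_mul, ← mul_div_assoc, div_le_iff₀ (by exact_mod_cast hn), mul_comm (#U : ℝ)]
      gcongr
      exact_mod_cast himage 0
    obtain ⟨v, hv, hfiber⟩ := exists_le_card_fiber_of_nsmul_le_card_of_maps_to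
      (fun φ hφ => mem_image_of_mem (c 0) hφ) ⟨_, mem_image_of_mem (c 0) hφ₀⟩ hcount
    set U' := {φ ∈ U | c 0 φ ≠ v}
    have havoid' : ∀ x : Fin m → β, ∃ φ ∈ U', ∀ j, c j.succ φ ≠ x j := by
      intro x
      obtain ⟨φ, hφ, hne⟩ := havoid (Fin.cons v x)
      exact ⟨φ, mem_filter.2 ⟨hφ, hne 0⟩, fun j => hne j.succ⟩
    have hIH := ih (fun j => c j.succ) U'
      (fun j => (card_le_card (image_subset_image (filter_subset _ U))).trans (himage j.succ))
      havoid'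
    have hsplit : (#{φ ∈ U | c 0 φ = v} : ℝ) + #U' = #U := by
      exact_mod_cast card_filter_add_card_filter_not _
    obtain ⟨φ₁, hφ₁, -⟩ := havoid' fun _ => Classical.arbitrary β
    have hlt : #U' < #U := by
      obtain ⟨φ, hφ, hφv⟩ := mem_image.1 hv
      exact card_lt_card (filter_ssubset.2 ⟨φ, hφ, not_not.2 hφv⟩)
    have hstep := bound_add_one_le hn (card_pos.2 ⟨φ₁, hφ₁⟩) hlt (by linarith)
    push_cast
    linarith

end EBK

theorem zero_sum_of_length_ge_EBK_general (G : Type*) [AddCommGroup G] [Fintype G]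
    (m : ℕ)
    (hlen : (m : ℝ) ≥ (AddMonoid.exponent G : ℝ) *
      (1 + Real.log ((Fintype.card G : ℝ) / (AddMonoid.exponent G : ℝ))))
    (g : Fin m → G) :
    ∃ K : Finset (Fin m), K.Nonempty ∧ ∑ k ∈ K, g k = 0 := by
  by_contra! hfree
  set n := AddMonoid.exponent G
  have hn : 0 < n := Nat.pos_of_ne_zero AddMonoid.exponent_ne_zero_of_finite
  have hnG : n ≤ Fintype.card G := Nat.le_of_dvd Fintype.card_pos AddGroup.exponent_dvd_card
  have hm := EBK.le_bound_of_forall_exists_ne hn (fun j (ψ : AddChar G ℂ) => ψ (g j)) univ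
    (fun j => EBK.card_image_addChar_apply_le univ (g j))
    fun x => (EBK.exists_addChar_apply_ne hfree x).imp fun ψ hψ => ⟨mem_univ ψ, hψ⟩
  rw [card_univ, AddChar.card_eq, EBK.bound, if_neg (not_lt.2 hnG)] at hm
  linarith

/-- van Emde Boas–Kruyswijk: any sequence of at least N(1 + ln(|G|/N)) elements
of a finite abelian group G of exponent N contains a nonempty zero-sum
subsequence. -/
theorem zero_sum_of_length_ge_EBK (G : Type*) [AddCommGroup G] [Fintype G]
    (m : ℕ) (hm : 0 < m)
    (hlen : (m : ℝ) ≥ (AddMonoid.exponent G : ℝ) *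
      (1 + Real.log ((Fintype.card G : ℝ) / (AddMonoid.exponent G : ℝ))))
    (g : Fin m → G) :
    ∃ K : Finset (Fin m), K.Nonempty ∧ ∑ k ∈ K, g k = 0 :=
  zero_sum_of_length_ge_EBK_general G m hlen g
end

section
/- Let p be a prime and d a positive integer, and let G = (ℤ/pℤ)^d. Every sequence (g_k), k = 1, ..., p^d, of p^d elements of G contains a nonempty subset K of {1, ..., p^d} with |K| ≤ p such that ∑_{k ∈ K} g_k = 0_G. -/
/-- Any `p` or more indexed scalars in `ZMod p` (`p` prime) admit a nonempty
subset of size at most `p` summing to zero (prefix-sum pigeonhole). -/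
lemma exists_subsum_zero {ι : Type*} [DecidableEq ι] {p : ℕ} (hp : p.Prime)
    (T : Finset ι) (hT : p ≤ T.card) (c : ι → ZMod p) :
    ∃ K : Finset ι, K ⊆ T ∧ K.Nonempty ∧ K.card ≤ p ∧ ∑ k ∈ K, c k = 0 := by
  haveI : Fact p.Prime := ⟨hp⟩
  haveI : NeZero p := ⟨hp.ne_zero⟩
  set l := T.toList with hl
  have hlen : l.length = T.card := Finset.length_toList T
  have hnodup : l.Nodup := Finset.nodup_toList T
  have hcard : Fintype.card (ZMod p) < Fintype.card (Fin (p + 1)) := by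
    rw [ZMod.card, Fintype.card_fin]; omega
  obtain ⟨a, b, hab, hfab⟩ :=
    Fintype.exists_ne_map_eq_of_card_lt
      (fun j : Fin (p + 1) => ((l.take j).map c).sum) hcard
  obtain ⟨i, j, hij, hjp, hfij⟩ : ∃ i j : ℕ, i < j ∧ j ≤ p ∧
      ((l.take i).map c).sum = ((l.take j).map c).sum := by
    rcases lt_or_gt_of_ne hab with h | h
    · exact ⟨a, b, h, Nat.lt_succ_iff.mp b.isLt, hfab⟩
    · exact ⟨b, a, h, Nat.lt_succ_iff.mp a.isLt, hfab.symm⟩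
  set seg := (l.drop i).take (j - i) with hseg
  have hsub : seg.Sublist l := ((l.drop i).take_sublist _).trans (l.drop_sublist i)
  have hsegnodup : seg.Nodup := hnodup.sublist hsub
  have htake : l.take j = l.take i ++ seg := by
    have h' : i + (j - i) = j := by omega
    rw [← h', List.take_add]
  have hseglen : seg.length = j - i := by
    rw [hseg, List.length_take, List.length_drop, hlen]; omega
  have hsegsum : (seg.map c).sum = 0 := by
    have h2 := hfij
    rw [htake, List.map_append, List.sum_append] at h2
    exact (left_eq_add.mp h2)
  refine ⟨seg.toFinset, ?_, ?_, ?_, ?_⟩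
  · intro x hx
    rw [List.mem_toFinset] at hx
    exact (Finset.mem_toList).mp (hsub.subset hx)
  · have hne : seg ≠ [] := by
      intro h; rw [h] at hseglen; simp at hseglen; omega
    obtain ⟨x, hx⟩ := List.exists_mem_of_ne_nil seg hne
    exact ⟨x, List.mem_toFinset.mpr hx⟩
  · calc seg.toFinset.card ≤ seg.length := seg.toFinset_card_le
      _ ≤ p := by omega
  · rw [List.sum_toFinset c hsegnodup, hsegsum]

/-- Every sequence of p^d elements of (ℤ/pℤ)^d contains a nonempty zero-sum
subsequence of length at most p. -/
theorem zero_sum_subsequence_card_le_p (p : ℕ) (hp : p.Prime) (d : ℕ)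
    (hd : 0 < d) (g : Fin (p ^ d) → (Fin d → ZMod p)) :
    ∃ K : Finset (Fin (p ^ d)), K.Nonempty ∧ K.card ≤ p ∧
      ∑ k ∈ K, g k = 0 := by
  haveI : Fact p.Prime := ⟨hp⟩
  haveI : NeZero p := ⟨hp.ne_zero⟩
  by_cases hzero : ∃ k, g k = 0
  · obtain ⟨k, hk⟩ := hzero
    exact ⟨{k}, Finset.singleton_nonempty k, by simpa using hp.one_lt.le,
      by simpa using hk⟩
  push_neg at hzero
  -- pigeonhole: some nonzero vector `w` has at least `p` scalar multiples among the `g k`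
  set F : Fin (p ^ d) × (ZMod p)ˣ → {w : Fin d → ZMod p // w ≠ 0} :=
    fun x => ⟨(x.2 : ZMod p) • g x.1, smul_ne_zero (Units.ne_zero x.2) (hzero x.1)⟩
    with hF
  have hcards : Fintype.card {w : Fin d → ZMod p // w ≠ 0} * (p - 1) <
      Fintype.card (Fin (p ^ d) × (ZMod p)ˣ) := by
    have h1 : Fintype.card {w : Fin d → ZMod p // w ≠ 0} = p ^ d - 1 := by
      have h := Fintype.card_subtype_compl (fun w : Fin d → ZMod p => w = 0)
      simp [Fintype.card_subtype_eq, ZMod.card] at h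
      simpa [ZMod.card] using h
    have h2 : Fintype.card (Fin (p ^ d) × (ZMod p)ˣ) = p ^ d * (p - 1) := by
      rw [Fintype.card_prod, Fintype.card_fin, ZMod.card_units]
    rw [h1, h2]
    have hpd : 0 < p ^ d := pow_pos hp.pos d
    exact Nat.mul_lt_mul_of_lt_of_le (by omega) le_rfl (by have := hp.one_lt; omega)
  obtain ⟨w, hw⟩ := Fintype.exists_lt_card_fiber_of_mul_lt_card F hcards
  set S := Finset.univ.filter (fun x => F x = w) with hS
  have hSp : p ≤ S.card := by have := hp.pos; omega
  have hinj : Set.InjOn (fun x : Fin (p ^ d) × (ZMod p)ˣ => x.1) ↑S := by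
    intro x hx y hy hxy
    have hx' : F x = w := (Finset.mem_filter.mp (Finset.mem_coe.mp hx)).2
    have hy' : F y = w := (Finset.mem_filter.mp (Finset.mem_coe.mp hy)).2
    have h1 : (x.2 : ZMod p) • g x.1 = (y.2 : ZMod p) • g y.1 := by
      have := congrArg Subtype.val (hx'.trans hy'.symm)
      simpa [hF] using this
    have hxy' : x.1 = y.1 := hxy
    rw [hxy'] at h1
    exact Prod.ext hxy' (Units.ext (smul_left_injective (ZMod p) (hzero y.1) h1))
  set T := S.image (fun x : Fin (p ^ d) × (ZMod p)ˣ => x.1) with hT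
  have hTcard : p ≤ T.card := by
    rw [hT, Finset.card_image_of_injOn hinj]; exact hSp
  obtain ⟨i0, hi0⟩ : ∃ i, w.1 i ≠ 0 := by
    by_contra h; push_neg at h; exact w.2 (funext h)
  set c : Fin (p ^ d) → ZMod p := fun k => g k i0 * (w.1 i0)⁻¹ with hc
  have hrep : ∀ k ∈ T, g k = c k • w.1 := by
    intro k hk
    obtain ⟨x, hxS, hx1⟩ := Finset.mem_image.mp hk
    have hxw : (x.2 : ZMod p) • g x.1 = w.1 := by
      have := (Finset.mem_filter.mp hxS).2
      simpa [hF] using congrArg Subtype.val this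
    have hu : (x.2 : ZMod p) ≠ 0 := Units.ne_zero x.2
    have hgk : g x.1 = ((x.2 : ZMod p))⁻¹ • w.1 := by
      rw [← hxw, inv_smul_smul₀ hu]
    have hck : c x.1 = ((x.2 : ZMod p))⁻¹ := by
      rw [hc]
      show g x.1 i0 * (w.1 i0)⁻¹ = ((x.2 : ZMod p))⁻¹
      rw [hgk, Pi.smul_apply, smul_eq_mul, mul_assoc, mul_inv_cancel₀ hi0, mul_one]
    rw [← hx1, hgk, hck]
  obtain ⟨K, hKT, hKne, hKc, hKsum⟩ := exists_subsum_zero hp T hTcard c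
  refine ⟨K, hKne, hKc, ?_⟩
  calc ∑ k ∈ K, g k = ∑ k ∈ K, c k • w.1 :=
        Finset.sum_congr rfl (fun k hk => hrep k (hKT hk))
    _ = (∑ k ∈ K, c k) • w.1 := (Finset.sum_smul).symm
    _ = 0 := by rw [hKsum, zero_smul]
end
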